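/- Let Φ denote the standard Gaussian CDF and Φ' its density. For constants c₁ < c₂ and T > 0, define for t ∈ [0,T) and x ∈ ℝ the quantities z₁ = (c₁ - x)/√(T-t), z₂ = (c₂ - x)/√(T-t), and I(x,t) = (1/√(T-t)) · (Φ'(z₁) - Φ'(z₂))² / ((Φ(z₂) - Φ(z₁)) · (Φ(-z₂) + Φ(z₁))). Then there is a constant C such that for all t ∈ [0,T), ∫_ℝ I(x,t) dx ≤ C. -/

import Mathlib

/-!
With `z₂ = z₁ + d`, `d ≥ a := (c₂ - c₁)/√T`, the denominator is the Gaussian mass `P` of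
`[z₁, z₂]` times the mass `Q` of its complement. Bounding `P` below by the mass of a subinterval
of length `≥ a/2` and `Q` below by `Φ(0)` or `Φ(z₁)`, according to the signs of `z₁, z₂`, gives
`PQ ≳ exp(-3z₁²/4)`, hence `Φ'(z₁)²/(PQ) ≲ exp(-z₁²/4)`; by the symmetry `z ↦ -z` the same holds
with `z₂`. The prefactor `1/√(T-t)` is the Jacobian of `x ↦ z`, so the `x`-integral is bounded
by a Gaussian integral that does not depend on `t`.
-/

open MeasureTheory Real Set

/-- Standard Gaussian density Φ'. -/
noncomputable def gaussPdf (z : ℝ) : ℝ := (Real.sqrt (2 * Real.pi))⁻¹ * Real.exp (-z ^ 2 / 2)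

/-- Standard Gaussian CDF Φ. -/
noncomputable def gaussCdf (z : ℝ) : ℝ := ∫ u in Set.Iic z, gaussPdf u

/-- The function I(x,t) from the paper. -/
noncomputable def Ifun (c₁ c₂ T x t : ℝ) : ℝ :=
  (Real.sqrt (T - t))⁻¹ *
    (gaussPdf ((c₁ - x) / Real.sqrt (T - t)) - gaussPdf ((c₂ - x) / Real.sqrt (T - t))) ^ 2 /
    ((gaussCdf ((c₂ - x) / Real.sqrt (T - t)) - gaussCdf ((c₁ - x) / Real.sqrt (T - t))) *
      (gaussCdf (-((c₂ - x) / Real.sqrt (T - t))) + gaussCdf ((c₁ - x) / Real.sqrt (T - t))))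

lemma gaussPdf_pos (z : ℝ) : 0 < gaussPdf z := by
  unfold gaussPdf
  positivity

lemma gaussPdf_neg (z : ℝ) : gaussPdf (-z) = gaussPdf z := by
  simp only [gaussPdf, neg_sq]

lemma gaussPdf_le_of_abs_le {u v : ℝ} (h : |u| ≤ |v|) : gaussPdf v ≤ gaussPdf u := by
  unfold gaussPdf
  have := sq_le_sq.2 h
  gcongr ?_ * exp ?_
  linarith

lemma gaussPdf_mul_gaussPdf (u v : ℝ) :
    gaussPdf u * gaussPdf v = exp (-(u ^ 2 + v ^ 2) / 2) / (2 * π) := by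
  rw [gaussPdf, gaussPdf, show -(u ^ 2 + v ^ 2) / 2 = -u ^ 2 / 2 + -v ^ 2 / 2 by ring, exp_add]
  field_simp
  exact (sq_sqrt (by positivity)).symm

lemma integrable_gaussPdf : Integrable gaussPdf := by
  refine ((integrable_exp_neg_mul_sq (b := 2⁻¹) (by norm_num)).const_mul
    (sqrt (2 * π))⁻¹).congr (Filter.Eventually.of_forall fun x => ?_)
  simp only [gaussPdf]
  ring_nf

lemma gaussCdf_sub_gaussCdf (a b : ℝ) : gaussCdf b - gaussCdf a = ∫ u in a..b, gaussPdf u :=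
  intervalIntegral.integral_Iic_sub_Iic integrable_gaussPdf.integrableOn
    integrable_gaussPdf.integrableOn

lemma gaussCdf_neg_sub_gaussCdf_neg (a b : ℝ) :
    gaussCdf (-a) - gaussCdf (-b) = gaussCdf b - gaussCdf a := by
  rw [gaussCdf_sub_gaussCdf, gaussCdf_sub_gaussCdf, ← intervalIntegral.integral_comp_neg]
  simp only [gaussPdf_neg]

lemma gaussCdf_nonneg (z : ℝ) : 0 ≤ gaussCdf z :=
  setIntegral_nonneg measurableSet_Iic fun u _ => (gaussPdf_pos u).le

lemma mul_gaussPdf_le_gaussCdf_sub {a b c : ℝ} (hab : a ≤ b) (ha : |a| ≤ c) (hb : |b| ≤ c) :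
    (b - a) * gaussPdf c ≤ gaussCdf b - gaussCdf a := by
  rw [gaussCdf_sub_gaussCdf]
  calc (b - a) * gaussPdf c = ∫ _ in a..b, gaussPdf c := by simp
    _ ≤ ∫ u in a..b, gaussPdf u := by
      refine intervalIntegral.integral_mono_on hab intervalIntegrable_const
        integrable_gaussPdf.intervalIntegrable fun u hu => gaussPdf_le_of_abs_le ?_
      rw [abs_of_nonneg ((abs_nonneg a).trans ha)]
      rw [abs_le] at ha hb ⊢
      exact ⟨by linarith [hu.1], by linarith [hu.2]⟩

lemma gaussCdf_mono : Monotone gaussCdf := fun a b hab => by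
  have := mul_gaussPdf_le_gaussCdf_sub hab (le_max_left |a| |b|) (le_max_right |a| |b|)
  nlinarith [gaussPdf_pos (max |a| |b|)]

lemma gaussPdf_abs_add_one_le_gaussCdf (z : ℝ) : gaussPdf (|z| + 1) ≤ gaussCdf z := by
  have hz := abs_nonneg z
  have := mul_gaussPdf_le_gaussCdf_sub (c := |z| + 1) (sub_le_self z zero_le_one)
    (by rw [abs_le]; constructor <;> linarith [le_abs_self z, neg_abs_le z]) (by linarith [le_abs_self z])
  linarith [gaussCdf_nonneg (z - 1)]

/-- The denominator of `Ifun`: the Gaussian mass of `[z₁, z₂]` times that of its complement. -/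
noncomputable def gaussDenom (z₁ z₂ : ℝ) : ℝ :=
  (gaussCdf z₂ - gaussCdf z₁) * (gaussCdf (-z₂) + gaussCdf z₁)

lemma gaussDenom_neg (z₁ z₂ : ℝ) : gaussDenom (-z₂) (-z₁) = gaussDenom z₁ z₂ := by
  rw [gaussDenom, gaussDenom, gaussCdf_neg_sub_gaussCdf_neg, neg_neg, add_comm]

lemma le_mul_of_gaussPdf_le {a c u v E P Q : ℝ} (ha : 0 ≤ a) (hc : a / 2 ≤ c)
    (hP : c * gaussPdf u ≤ P) (hQ : gaussPdf v ≤ Q) (hE : u ^ 2 + v ^ 2 ≤ 2 * E) :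
    a * exp (-E) / (4 * π) ≤ P * Q := by
  have hc0 : 0 ≤ c := by linarith
  calc a * exp (-E) / (4 * π) = a / 2 * (exp (-(2 * E) / 2) / (2 * π)) := by ring_nf
    _ ≤ c * (gaussPdf u * gaussPdf v) := by
      rw [gaussPdf_mul_gaussPdf]
      gcongr
    _ = c * gaussPdf u * gaussPdf v := by ring
    _ ≤ P * Q := mul_le_mul hP hQ (gaussPdf_pos v).le ((mul_nonneg hc0 (gaussPdf_pos u).le).trans hP)

lemma gaussDenom_ge {a z₁ z₂ : ℝ} (ha : 0 < a) (h : z₁ + a ≤ z₂) :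
    a * exp (-(3 * z₁ ^ 2 / 4 + 3 * (a ^ 2 + 1) / 2)) / (4 * π) ≤ gaussDenom z₁ z₂ := by
  have hΦ0 : gaussPdf 1 ≤ gaussCdf 0 := by simpa using gaussPdf_abs_add_one_le_gaussCdf 0
  rcases le_or_gt 0 z₁ with hz₁ | hz₁
  · refine le_mul_of_gaussPdf_le ha.le (c := a) (u := z₁ + a) (v := 1) (by linarith) ?_ ?_
      (by nlinarith [sq_nonneg (z₁ - 2 * a)])
    · have := mul_gaussPdf_le_gaussCdf_sub (le_add_of_nonneg_right ha.le)
        (by rw [abs_of_nonneg hz₁]; linarith) (abs_of_nonneg (by linarith)).le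
      have := gaussCdf_mono h
      linarith
    · linarith [gaussCdf_nonneg (-z₂), gaussCdf_mono hz₁]
  rcases le_or_gt z₂ 0 with hz₂ | hz₂
  · refine le_mul_of_gaussPdf_le ha.le (c := a) (u := -z₁) (v := 1) (by linarith) ?_ ?_
      (by nlinarith [sq_nonneg a])
    · have := mul_gaussPdf_le_gaussCdf_sub (c := -z₁) (sub_le_self z₂ ha.le)
        (by rw [abs_of_nonpos (by linarith)]; linarith) (by rw [abs_of_nonpos hz₂]; linarith)
      have := gaussCdf_mono (show z₁ ≤ z₂ - a by linarith)
      linarith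
    · linarith [gaussCdf_nonneg z₁, gaussCdf_mono (neg_nonneg.2 hz₂)]
  · refine le_mul_of_gaussPdf_le ha.le (c := a / 2) (u := a / 2) (v := |z₁| + 1) le_rfl ?_ ?_
      (by nlinarith [sq_abs z₁, sq_nonneg (|z₁| - 2), sq_nonneg a])
    · rcases le_or_gt (a / 2) z₂ with hz₂' | hz₂'
      · have := mul_gaussPdf_le_gaussCdf_sub (show (0 : ℝ) ≤ a / 2 by linarith)
          (by rw [abs_zero]; linarith) (abs_of_nonneg (by linarith)).le
        linarith [gaussCdf_mono hz₂', gaussCdf_mono hz₁.le]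
      · have := mul_gaussPdf_le_gaussCdf_sub (show -(a / 2) ≤ 0 by linarith)
          (by rw [abs_neg, abs_of_nonneg (by linarith)]) (by rw [abs_zero]; linarith)
        linarith [gaussCdf_mono hz₂.le, gaussCdf_mono (show z₁ ≤ -(a / 2) by linarith)]
    · linarith [gaussCdf_nonneg (-z₂), gaussPdf_abs_add_one_le_gaussCdf z₁]

lemma gaussDenom_pos {a z₁ z₂ : ℝ} (ha : 0 < a) (h : z₁ + a ≤ z₂) : 0 < gaussDenom z₁ z₂ :=
  lt_of_lt_of_le (by positivity) (gaussDenom_ge ha h)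

lemma sq_gaussPdf_div_gaussDenom_le {a z₁ z₂ : ℝ} (ha : 0 < a) (h : z₁ + a ≤ z₂) :
    gaussPdf z₁ ^ 2 / gaussDenom z₁ z₂ ≤ 2 * exp (3 * (a ^ 2 + 1) / 2) / a * exp (-z₁ ^ 2 / 4) := by
  rw [div_le_iff₀ (gaussDenom_pos ha h)]
  calc gaussPdf z₁ ^ 2
      = 2 * exp (3 * (a ^ 2 + 1) / 2) / a * exp (-z₁ ^ 2 / 4) *
          (a * exp (-(3 * z₁ ^ 2 / 4 + 3 * (a ^ 2 + 1) / 2)) / (4 * π)) := by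
        have hexp : exp (-(z₁ ^ 2 + z₁ ^ 2) / 2) = exp (3 * (a ^ 2 + 1) / 2) *
            exp (-z₁ ^ 2 / 4) * exp (-(3 * z₁ ^ 2 / 4 + 3 * (a ^ 2 + 1) / 2)) := by
          rw [← exp_add, ← exp_add]
          ring_nf
        rw [sq, gaussPdf_mul_gaussPdf, hexp]
        field_simp
        ring
    _ ≤ _ := by gcongr; exact gaussDenom_ge ha h

lemma sq_sub_gaussPdf_div_gaussDenom_le {a z₁ z₂ : ℝ} (ha : 0 < a) (h : z₁ + a ≤ z₂) :
    (gaussPdf z₁ - gaussPdf z₂) ^ 2 / gaussDenom z₁ z₂ ≤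
      2 * (2 * exp (3 * (a ^ 2 + 1) / 2) / a) * (exp (-z₁ ^ 2 / 4) + exp (-z₂ ^ 2 / 4)) := by
  have h₁ := sq_gaussPdf_div_gaussDenom_le ha h
  have h₂ := sq_gaussPdf_div_gaussDenom_le ha (z₁ := -z₂) (z₂ := -z₁) (by linarith)
  rw [gaussPdf_neg, gaussDenom_neg, neg_sq] at h₂
  have hD := gaussDenom_pos ha h
  calc (gaussPdf z₁ - gaussPdf z₂) ^ 2 / gaussDenom z₁ z₂
      ≤ (2 * gaussPdf z₁ ^ 2 + 2 * gaussPdf z₂ ^ 2) / gaussDenom z₁ z₂ := by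
        gcongr
        nlinarith [sq_nonneg (gaussPdf z₁ + gaussPdf z₂)]
    _ = 2 * (gaussPdf z₁ ^ 2 / gaussDenom z₁ z₂) + 2 * (gaussPdf z₂ ^ 2 / gaussDenom z₁ z₂) := by
        ring
    _ ≤ _ := by linarith

lemma exp_neg_div_sq_div_four_eq {s : ℝ} (hs : s ≠ 0) (c x : ℝ) :
    exp (-((c - x) / s) ^ 2 / 4) = exp (-(4 * s ^ 2)⁻¹ * (x - c) ^ 2) := by
  congr 1
  field_simp
  ring

lemma integrable_exp_neg_div_sq_div_four {s : ℝ} (hs : 0 < s) (c : ℝ) :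
    Integrable fun x => exp (-((c - x) / s) ^ 2 / 4) := by
  simp_rw [exp_neg_div_sq_div_four_eq hs.ne']
  exact (integrable_exp_neg_mul_sq (by positivity)).comp_sub_right c

lemma integral_exp_neg_div_sq_div_four {s : ℝ} (hs : 0 < s) (c : ℝ) :
    ∫ x, exp (-((c - x) / s) ^ 2 / 4) = 2 * s * sqrt π := by
  simp_rw [exp_neg_div_sq_div_four_eq hs.ne']
  rw [integral_sub_right_eq_self (fun y => exp (-(4 * s ^ 2)⁻¹ * y ^ 2)) c, integral_gaussian,
    div_inv_eq_mul, mul_comm, sqrt_mul (by positivity), show 4 * s ^ 2 = (2 * s) ^ 2 by ring,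
    sqrt_sq (by positivity)]

lemma Ifun_eq (c₁ c₂ T x t : ℝ) :
    Ifun c₁ c₂ T x t = (sqrt (T - t))⁻¹ *
      ((gaussPdf ((c₁ - x) / sqrt (T - t)) - gaussPdf ((c₂ - x) / sqrt (T - t))) ^ 2 /
        gaussDenom ((c₁ - x) / sqrt (T - t)) ((c₂ - x) / sqrt (T - t))) :=
  mul_div_assoc _ _ _

lemma integral_Ifun_le {c₁ c₂ T t a : ℝ} (ha : 0 < a) (ht : t < T)
    (hgap : a * sqrt (T - t) ≤ c₂ - c₁) :
    ∫ x, Ifun c₁ c₂ T x t ≤ 8 * (2 * exp (3 * (a ^ 2 + 1) / 2) / a) * sqrt π := by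
  set s := sqrt (T - t)
  set K := 2 * exp (3 * (a ^ 2 + 1) / 2) / a
  have hs : 0 < s := sqrt_pos.2 (sub_pos.2 ht)
  have hz : ∀ x, (c₁ - x) / s + a ≤ (c₂ - x) / s := fun x => by
    rw [div_add' _ _ _ hs.ne', div_le_div_iff_of_pos_right hs]
    linarith
  have hle : ∀ x, Ifun c₁ c₂ T x t ≤
      s⁻¹ * (2 * K * (exp (-((c₁ - x) / s) ^ 2 / 4) + exp (-((c₂ - x) / s) ^ 2 / 4))) := by
    intro x
    rw [Ifun_eq]
    gcongr
    exact sq_sub_gaussPdf_div_gaussDenom_le ha (hz x)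
  have hnonneg : ∀ x, 0 ≤ Ifun c₁ c₂ T x t := by
    intro x
    rw [Ifun_eq]
    exact mul_nonneg (inv_nonneg.2 hs.le)
      (div_nonneg (sq_nonneg _) (gaussDenom_pos ha (hz x)).le)
  have hint₁ := integrable_exp_neg_div_sq_div_four hs c₁
  have hint₂ := integrable_exp_neg_div_sq_div_four hs c₂
  calc ∫ x, Ifun c₁ c₂ T x t
      ≤ ∫ x, s⁻¹ * (2 * K * (exp (-((c₁ - x) / s) ^ 2 / 4) + exp (-((c₂ - x) / s) ^ 2 / 4))) :=
        integral_mono_of_nonneg (.of_forall hnonneg) (((hint₁.add hint₂).const_mul _).const_mul _)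
          (.of_forall hle)
    _ = s⁻¹ * (2 * K * (2 * s * sqrt π + 2 * s * sqrt π)) := by
        rw [integral_const_mul, integral_const_mul, integral_add hint₁ hint₂,
          integral_exp_neg_div_sq_div_four hs, integral_exp_neg_div_sq_div_four hs]
    _ = 8 * K * sqrt π := by
        field_simp
        ring

theorem stmt0 (c₁ c₂ T : ℝ) (hc : c₁ < c₂) (hT : 0 < T) :
    ∃ C : ℝ, ∀ t ∈ Set.Ico (0 : ℝ) T, (∫ x : ℝ, Ifun c₁ c₂ T x t) ≤ C := by
  have hsT : 0 < sqrt T := sqrt_pos.2 hT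
  set a := (c₂ - c₁) / sqrt T
  have ha : 0 < a := div_pos (sub_pos.2 hc) hsT
  refine ⟨8 * (2 * exp (3 * (a ^ 2 + 1) / 2) / a) * sqrt π, fun t ht => ?_⟩
  refine integral_Ifun_le ha ht.2 ?_
  calc a * sqrt (T - t) ≤ a * sqrt T := by gcongr; linarith [ht.1]
    _ = c₂ - c₁ := div_mul_cancel₀ _ hsT.ne'
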